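/- arXiv:2001.06958 — 5 statements merged into one kernel-verified Lean document; each statement's English description precedes it below -/
import Mathlib

section
/- Among all trees on n ≥ 2 vertices, the star K_{1,n-1} minimizes the Wiener index, i.e., the sum of distances over all unordered pairs of vertices. -/
open scoped Classical
open Finset SimpleGraph

noncomputable def wienerIndex {n : ℕ} (G : SimpleGraph (Fin n)) : ℕ :=
  ∑ p : Sym2 (Fin n), Sym2.lift ⟨G.dist, fun _ _ => G.dist_comm⟩ p

def starGraph (n : ℕ) : SimpleGraph (Fin n) :=
  SimpleGraph.fromRel (fun a _ => (a : ℕ) = 0)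

/-!
In a connected graph every pair of distinct vertices contributes at least `2` to
`W(G) + |E(G)|`: `1 + 1` if adjacent, at least `2 + 0` otherwise; equality holds for every pair
when some vertex is adjacent to all others, as the centre of the star is. Since all trees on `n`
vertices have `n - 1` edges, `W(T) ≥ 2 * n.choose 2 - (n - 1) = W(K_{1,n-1})`.
-/

namespace SimpleGraph

variable {V : Type*} {G : SimpleGraph V}

lemma IsUniversal.dist_le_two {c : V} (hc : G.IsUniversal c) (u v : V) : G.dist u v ≤ 2 := by
  have dist_le_one : ∀ w, G.dist c w ≤ 1 := fun w => by
    by_cases hw : c = w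
    · simp [hw]
    · exact (dist_eq_one_iff_adj.2 (hc hw)).le
  calc G.dist u v ≤ G.dist u c + G.dist c v := (Connected.of_isUniversal hc).dist_triangle
    _ = G.dist c u + G.dist c v := by rw [dist_comm]
    _ ≤ 1 + 1 := add_le_add (dist_le_one u) (dist_le_one v)

lemma Connected.dist_add_ite_adj_eq_max (hG : G.Connected) {u v : V} (huv : u ≠ v) :
    G.dist u v + (if G.Adj u v then 1 else 0) = max (G.dist u v) 2 := by
  have hpos := hG.pos_dist_of_ne huv
  by_cases hadj : G.Adj u v
  · simp [hadj, dist_eq_one_iff_adj.2 hadj]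
  · have : G.dist u v ≠ 1 := fun h => hadj (dist_eq_one_iff_adj.1 h)
    simp only [hadj, if_false]
    omega

end SimpleGraph

lemma starGraph_eq_starGraph_zero {n : ℕ} (hn : 0 < n) :
    _root_.starGraph n = SimpleGraph.starGraph (⟨0, hn⟩ : Fin n) := by
  ext a b
  simp [_root_.starGraph, Fin.ext_iff]

section Wiener

variable {n : ℕ} {G : SimpleGraph (Fin n)}

lemma card_filter_not_isDiag : #(univ.filter fun p : Sym2 (Fin n) => ¬p.IsDiag) = n.choose 2 := by
  rw [← Fintype.card_subtype, Sym2.card_subtype_not_diag, Fintype.card_fin]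

lemma wienerIndex_add_card_edgeFinset_eq_sum (G : SimpleGraph (Fin n)) [Fintype G.edgeSet] :
    wienerIndex G + #G.edgeFinset =
      ∑ p ∈ univ.filter (fun p : Sym2 (Fin n) => ¬p.IsDiag),
        Sym2.lift ⟨fun u v => G.dist u v + if G.Adj u v then 1 else 0,
          fun u v => by simp only [dist_comm, adj_comm]⟩ p := by
  have card_edgeFinset : #G.edgeFinset = ∑ p, if p ∈ G.edgeSet then 1 else 0 := by
    simp [← mem_edgeFinset]
  rw [wienerIndex, card_edgeFinset, ← sum_add_distrib, sum_filter_of_ne]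
  · refine sum_congr rfl fun p _ => ?_
    induction p using Sym2.ind
    simp
  · intro p _ hp_ne hp_diag
    induction p using Sym2.ind with
    | _ u v =>
      rw [Sym2.mk_isDiag_iff] at hp_diag
      subst hp_diag
      simp at hp_ne

lemma SimpleGraph.Connected.two_mul_choose_two_le_wienerIndex_add_card_edgeFinset
    [Fintype G.edgeSet] (hG : G.Connected) : 2 * n.choose 2 ≤ wienerIndex G + #G.edgeFinset := by
  rw [wienerIndex_add_card_edgeFinset_eq_sum, ← card_filter_not_isDiag, mul_comm, ← smul_eq_mul]
  refine card_nsmul_le_sum _ _ _ fun p hp => ?_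
  induction p using Sym2.ind with
  | _ u v =>
    rw [mem_filter, Sym2.mk_isDiag_iff] at hp
    rw [Sym2.lift_mk]
    dsimp only
    rw [hG.dist_add_ite_adj_eq_max hp.2]
    exact le_max_right _ _

lemma SimpleGraph.IsUniversal.wienerIndex_add_card_edgeFinset_eq [Fintype G.edgeSet] {c : Fin n}
    (hc : G.IsUniversal c) :
    wienerIndex G + #G.edgeFinset = 2 * n.choose 2 := by
  rw [wienerIndex_add_card_edgeFinset_eq_sum, ← card_filter_not_isDiag, mul_comm]
  refine sum_const_nat fun p hp => ?_
  induction p using Sym2.ind with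
  | _ u v =>
    rw [mem_filter, Sym2.mk_isDiag_iff] at hp
    rw [Sym2.lift_mk]
    dsimp only
    rw [(Connected.of_isUniversal hc).dist_add_ite_adj_eq_max hp.2]
    exact max_eq_right (hc.dist_le_two u v)

end Wiener

/-- Among all trees on n ≥ 2 vertices, the star minimizes the Wiener index. -/
theorem star_minimizes_wiener (n : ℕ) (hn : 2 ≤ n) :
    (_root_.starGraph n).IsTree ∧
      ∀ T : SimpleGraph (Fin n), T.IsTree →
        wienerIndex (starGraph n) ≤ wienerIndex T := by
  have hn0 : 0 < n := by omega
  rw [starGraph_eq_starGraph_zero hn0]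
  have hstar_tree := isTree_starGraph (⟨0, hn0⟩ : Fin n)
  refine ⟨hstar_tree, fun T hT => ?_⟩
  have hstar := (isUniversal_starGraph_self (r := ⟨0, hn0⟩)).wienerIndex_add_card_edgeFinset_eq
  have hT_bound := hT.connected.two_mul_choose_two_le_wienerIndex_add_card_edgeFinset
  have hstar_edges := hstar_tree.card_edgeFinset
  have hT_edges := hT.card_edgeFinset
  rw [Fintype.card_fin] at hstar_edges hT_edges
  omega
end

section
/- Among all trees on n ≥ 2 vertices, the path P_n maximizes the Wiener index. -/
open scoped Classical
open Finset SimpleGraph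

/-!
Deleting a leaf `v` of a tree leaves a tree in which distances are unchanged, so the distance sum
`∑ x, ∑ y, d x y` drops by exactly `2 * ∑ u, d v u`. In any connected graph on `n` vertices every
positive distance from `v` is one more than another distance from `v`, which bounds
`∑ u, d v u` by `0 + 1 + ⋯ + (n - 1)`. By induction, `3 * ∑ x, ∑ y, d x y ≤ (n - 1) n (n + 1)`
for every tree, and the path attains this bound since its distances are `d i j = |i - j|`.
-/

theorem Finset.sum_sum_eq_two_nsmul_sum_sym2 {α M : Type*} [Fintype α] [AddCommMonoid M]
    (f : α → α → M) (hf : ∀ a b, f a b = f b a) (hdiag : ∀ a, f a a = 0) :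
    ∑ a, ∑ b, f a b = 2 • ∑ z : Sym2 α, Sym2.lift ⟨f, hf⟩ z := by
  rw [← Fintype.sum_prod_type',
    ← sum_fiberwise univ (fun x : α × α => s(x.1, x.2)) (fun x : α × α => f x.1 x.2), smul_sum]
  refine Finset.sum_congr rfl fun z _ => ?_
  induction z with
  | _ a b =>
    rcases eq_or_ne a b with rfl | hab
    · have hfiber : ({x | s(x.1, x.2) = s(a, a)} : Finset (α × α)) = {(a, a)} := by
        ext ⟨i, j⟩; simp
      rw [hfiber, sum_singleton, Sym2.lift_mk]
      simp [hdiag]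
    · have hfiber : ({x | s(x.1, x.2) = s(a, b)} : Finset (α × α)) = {(a, b), (b, a)} := by
        ext ⟨i, j⟩; simp [Prod.ext_iff]
      rw [hfiber, sum_pair (by simp [hab]), Sym2.lift_mk, two_nsmul, hf b a]

theorem Finset.sum_le_sum_range_card_of_exists_pred {ι : Type*} (s : Finset ι)
    (f : ι → ℕ) (h : ∀ u ∈ s, 0 < f u → ∃ w ∈ s, f w + 1 = f u) :
    ∑ u ∈ s, f u ≤ ∑ k ∈ range #s, k := by
  suffices (∀ u ∈ s, f u < #s) ∧ ∑ u ∈ s, f u ≤ ∑ k ∈ range #s, k from this.2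
  -- an element of maximal value is nobody's predecessor, so it can be removed
  induction s using Finset.induction_on_max_value f with
  | empty => simp
  | insert a s ha hmax ih =>
    have hs : ∀ u ∈ s, 0 < f u → ∃ w ∈ s, f w + 1 = f u := by
      intro u hu hpos
      obtain ⟨w, hw, hwu⟩ := h u (mem_insert_of_mem hu) hpos
      refine ⟨w, (mem_insert.1 hw).resolve_left ?_, hwu⟩
      rintro rfl
      have := hmax u hu
      omega
    obtain ⟨hlt, hsum⟩ := ih hs
    have hfa : f a < #s + 1 := by
      rcases Nat.eq_zero_or_pos (f a) with h0 | hpos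
      · omega
      obtain ⟨w, hw, hwa⟩ := h a (mem_insert_self a s) hpos
      have := hlt w ((mem_insert.1 hw).resolve_left (by rintro rfl; omega))
      omega
    rw [card_insert_of_notMem ha, sum_insert ha, sum_range_succ]
    refine ⟨fun u hu => ?_, by omega⟩
    rcases mem_insert.1 hu with rfl | hu
    · exact hfa
    · have := hlt u hu
      omega

theorem Nat.three_mul_sum_sum_dist_range (n : ℕ) :
    3 * ∑ i ∈ range n, ∑ j ∈ range n, Nat.dist i j = (n - 1) * n * (n + 1) := by
  induction n with
  | zero => simp
  | succ n ih =>
    have hlast : ∑ i ∈ range n, Nat.dist i n = ∑ i ∈ range (n + 1), i := by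
      rw [← sum_range_reflect (fun i => i), sum_range_succ, add_tsub_cancel_right, tsub_self,
        add_zero]
      exact sum_congr rfl fun i hi => Nat.dist_eq_sub_of_le (mem_range.1 hi).le
    have hgauss := sum_range_id_mul_two (n + 1)
    rw [← hlast] at hgauss
    simp only [sum_range_succ, sum_add_distrib, Nat.dist_self, add_zero, Nat.dist_comm n]
    rcases n with _ | m
    · simp
    · simp only [add_tsub_cancel_right] at ih hgauss ⊢
      linarith

namespace SimpleGraph

variable {V W : Type*} {G : SimpleGraph V} {H : SimpleGraph W}

theorem Connected.exists_dist_add_one_eq (hG : G.Connected) {v u : V} (h : 0 < G.dist v u) :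
    ∃ w, G.dist v w + 1 = G.dist v u := by
  obtain ⟨p, hp⟩ := hG.exists_walk_length_eq_dist u v
  have hnil : ¬ p.Nil := by
    rw [← Walk.length_eq_zero_iff, hp, dist_comm]
    omega
  refine ⟨p.snd, ?_⟩
  have hle : G.dist p.snd v ≤ p.tail.length := dist_le _
  have := p.length_tail_add_one hnil
  have := (p.adj_snd hnil).diff_dist_adj (u := v)
  rw [dist_comm (u := p.snd)] at hle
  rw [dist_comm (u := u)] at hp
  omega

theorem Connected.sum_dist_le [Fintype V] (hG : G.Connected) (v : V) :
    ∑ u, G.dist v u ≤ ∑ k ∈ range (Fintype.card V), k :=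
  sum_le_sum_range_card_of_exists_pred univ _ fun _ _ hu => by
    simpa using hG.exists_dist_add_one_eq hu

theorem IsAcyclic.dist_eq_length (hG : G.IsAcyclic) {u v : V} {p : G.Walk u v} (hp : p.IsPath) :
    G.dist u v = p.length := by
  obtain ⟨q, hq, hlen⟩ := p.reachable.exists_path_of_dist
  rw [← hlen, congrArg (fun r : G.Path u v => r.1.length)
    ((hG.subsingleton_path u v).elim ⟨q, hq⟩ ⟨p, hp⟩)]

theorem IsAcyclic.dist_map (hG : G.IsAcyclic) (f : H →g G) (hf : Function.Injective f) {u v : W}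
    (h : H.Reachable u v) : G.dist (f u) (f v) = H.dist u v := by
  obtain ⟨p, hp, hlen⟩ := h.exists_path_of_dist
  rw [hG.dist_eq_length (hp.map hf), Walk.length_map, hlen]

theorem IsAcyclic.dist_induce (hG : G.IsAcyclic) {s : Set V} {x y : s}
    (h : (G.induce s).Reachable x y) : (G.induce s).dist x y = G.dist x y :=
  (hG.dist_map (Embedding.induce (G := G) s).toHom (Embedding.induce (G := G) s).injective h).symm

theorem IsTree.induce_compl_singleton_of_degree_eq_one (hG : G.IsTree) {v : V}
    [Fintype (G.neighborSet v)] (hv : G.degree v = 1) : (G.induce {v}ᶜ).IsTree :=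
  ⟨hG.connected.induce_compl_singleton_of_degree_eq_one hv, hG.isAcyclic.induce _⟩

theorem sum_sum_dist_eq_sum_sum_dist_compl_singleton_add [Fintype V] (G : SimpleGraph V) (v : V) :
    ∑ x, ∑ y, G.dist x y =
      ∑ x : ({v}ᶜ : Set V), ∑ y : ({v}ᶜ : Set V), G.dist x y + 2 * ∑ u, G.dist v u := by
  have hsplit (f : V → ℕ) : ∑ x, f x = f v + ∑ x : ({v}ᶜ : Set V), f x :=
    Fintype.sum_eq_add_sum_subtype_ne f v
  have hcol : ∑ u, G.dist v u = ∑ x : ({v}ᶜ : Set V), G.dist x v := by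
    rw [hsplit, dist_self, zero_add]
    exact sum_congr rfl fun x _ => dist_comm
  rw [hsplit, sum_congr rfl fun (x : ({v}ᶜ : Set V)) _ => hsplit (G.dist x), sum_add_distrib,
    ← hcol]
  ring

theorem IsTree.three_mul_sum_sum_dist_le [Fintype V] (hG : G.IsTree) :
    3 * ∑ x, ∑ y, G.dist x y ≤ (Fintype.card V - 1) * Fintype.card V * (Fintype.card V + 1) := by
  obtain ⟨n, hn⟩ : ∃ n, Fintype.card V = n := ⟨_, rfl⟩
  induction n generalizing V with
  | zero => simp [Fintype.card_eq_zero_iff.1 hn]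
  | succ n ih =>
    rcases subsingleton_or_nontrivial V with hV | hV
    · have (x y : V) : G.dist x y = 0 := by rw [Subsingleton.elim x y, dist_self]
      simp [this]
    obtain ⟨v, hv⟩ := hG.exists_vert_degree_one_of_nontrivial
    have hG' := hG.induce_compl_singleton_of_degree_eq_one hv
    have hcard : Fintype.card ({v}ᶜ : Set V) = n := by
      rw [Fintype.card_compl_set, hn]
      simp
    have hrest := ih hG' hcard
    simp only [fun x y => hG.isAcyclic.dist_induce (hG'.connected x y), hcard] at hrest
    have hv_sum := hG.connected.sum_dist_le v
    rw [hn] at hv_sum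
    have hgauss := sum_range_id_mul_two (n + 1)
    rw [sum_sum_dist_eq_sum_sum_dist_compl_singleton_add G v, hn]
    obtain ⟨m, rfl⟩ : ∃ m, n = m + 1 := ⟨n - 1, by have := Fintype.one_lt_card (α := V); omega⟩
    simp only [add_tsub_cancel_right] at hrest hgauss ⊢
    linarith

theorem pathGraph_natDist_le_length {n : ℕ} {i j : Fin n} (p : (pathGraph n).Walk i j) :
    Nat.dist i j ≤ p.length := by
  induction p with
  | nil => simp
  | cons h _ ih =>
    rw [pathGraph_adj] at h
    rw [Walk.length_cons]
    unfold Nat.dist at ih ⊢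
    omega

theorem pathGraph_natDist_le_dist {n : ℕ} (i j : Fin n) :
    Nat.dist i j ≤ (pathGraph n).dist i j := by
  obtain ⟨p, hp⟩ := (pathGraph_preconnected n i j).exists_walk_length_eq_dist
  exact hp ▸ pathGraph_natDist_le_length p

theorem le_three_mul_sum_sum_dist_pathGraph (n : ℕ) :
    (n - 1) * n * (n + 1) ≤ 3 * ∑ i, ∑ j, (pathGraph n).dist i j := by
  rw [← Nat.three_mul_sum_sum_dist_range, ← Fin.sum_univ_eq_sum_range]
  simp only [← Fin.sum_univ_eq_sum_range (fun j => Nat.dist _ j)]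
  gcongr with i _ j
  exact pathGraph_natDist_le_dist i j

theorem card_edgeSet_pathGraph (n : ℕ) : Nat.card (pathGraph (n + 1)).edgeSet = n := by
  refine .trans (Nat.card_eq_of_bijective (α := Fin n) (β := (pathGraph (n + 1)).edgeSet)
    (fun i => ⟨s(i.castSucc, i.succ), by simp [pathGraph_adj]⟩) ⟨?_, ?_⟩).symm (Nat.card_fin n)
  · intro i j hij
    simp only [Subtype.mk.injEq, Sym2.eq_iff] at hij
    ext
    rcases hij with ⟨h₁, h₂⟩ | ⟨h₁, h₂⟩ <;>
      simp only [Fin.ext_iff, Fin.val_castSucc, Fin.val_succ] at h₁ h₂ <;> omega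
  · rintro ⟨e, he⟩
    induction e with
    | _ a b =>
      rw [mem_edgeSet, pathGraph_adj] at he
      rcases he with h | h
      · exact ⟨⟨a, by omega⟩, by ext; simp [Fin.ext_iff]; omega⟩
      · exact ⟨⟨b, by omega⟩, by ext; simp [Fin.ext_iff]; omega⟩

theorem isTree_pathGraph (n : ℕ) : (pathGraph (n + 1)).IsTree :=
  isTree_iff_connected_and_card.2
    ⟨pathGraph_connected n, by rw [card_edgeSet_pathGraph, Nat.card_fin]⟩

end SimpleGraph

/-- Among all trees on n ≥ 2 vertices, the path maximizes the Wiener index. -/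
theorem path_maximizes_wiener (n : ℕ) (hn : 2 ≤ n) :
    (SimpleGraph.pathGraph n).IsTree ∧
      ∀ T : SimpleGraph (Fin n), T.IsTree →
        wienerIndex T ≤ wienerIndex (SimpleGraph.pathGraph n) := by
  obtain ⟨m, rfl⟩ : ∃ m, n = m + 1 := ⟨n - 1, by omega⟩
  refine ⟨isTree_pathGraph m, fun T hT => ?_⟩
  have hwiener (G : SimpleGraph (Fin (m + 1))) : ∑ i, ∑ j, G.dist i j = 2 * wienerIndex G := by
    rw [wienerIndex, sum_sum_eq_two_nsmul_sum_sym2 _ (fun _ _ => dist_comm) fun _ => dist_self,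
      smul_eq_mul]
  have htree := hT.three_mul_sum_sum_dist_le
  have hpath := le_three_mul_sum_sum_dist_pathGraph (m + 1)
  rw [Fintype.card_fin] at htree
  rw [hwiener] at htree hpath
  omega
end

section
/- Among all trees on n ≥ 2 vertices, the star K_{1,n-1} maximizes the number of subtrees, and this maximum number equals 2^{n-1} + n - 1. -/
/-!
A connected vertex set with at least two vertices has no isolated vertex, so it is determined by
the nonempty set of edges it spans. A graph with `m` edges on `n` vertices therefore has at most
`n + (2 ^ m - 1)` connected vertex sets, and a tree has `m = n - 1`. The star attains the bound:
every vertex set containing the centre is connected, and the other connected sets are the single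
leaves.
-/

open scoped Classical
open Finset SimpleGraph

/-- The number of subtrees (nonempty connected subgraphs) of a tree, counted via
vertex subsets inducing a connected subgraph. -/
noncomputable def numSubtrees {n : ℕ} (T : SimpleGraph (Fin n)) : ℕ :=
  (Finset.univ.powerset.filter
    (fun s : Finset (Fin n) => s.Nonempty ∧ (SimpleGraph.induce (↑s) T).Connected)).card

namespace SimpleGraph

variable {V : Type*} {G : SimpleGraph V}

lemma connected_induce_singleton (G : SimpleGraph V) (v : V) : (G.induce {v}).Connected := by
  rw [induce_singleton_eq_top]
  exact connected_top

lemma connected_induce_of_forall_adj {s : Set V} {u : V} (hu : u ∈ s)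
    (h : ∀ v ∈ s, u ≠ v → G.Adj u v) : (G.induce s).Connected :=
  Connected.of_isUniversal (v := ⟨u, hu⟩) fun w huw => h w w.2 fun e => huw (Subtype.ext e)

lemma exists_adj_of_connected_induce {s : Set V} (hc : (G.induce s).Connected)
    (hs : s.Nontrivial) {v : V} (hv : v ∈ s) : ∃ w ∈ s, G.Adj v w := by
  have : Nontrivial s := hs.coe_sort
  obtain ⟨⟨w, hw⟩, hvw⟩ := hc.preconnected.exists_adj_of_nontrivial ⟨v, hv⟩
  exact ⟨w, hw, hvw⟩

lemma subset_of_edgeFinset_inter_sym2_subset [DecidableEq V] [Fintype G.edgeSet]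
    {s t : Finset V} (hs : ∀ v ∈ s, ∃ w ∈ s, G.Adj v w) (h : G.edgeFinset ∩ s.sym2 ⊆ t.sym2) :
    s ⊆ t := by
  intro v hv
  obtain ⟨w, hw, hvw⟩ := hs v hv
  have : s(v, w) ∈ t.sym2 := h (mem_inter.2 ⟨by simpa using hvw, mk_mem_sym2_iff.2 ⟨hv, hw⟩⟩)
  exact (mk_mem_sym2_iff.1 this).1

lemma injOn_edgeFinset_inter_sym2 [DecidableEq V] [Fintype G.edgeSet] :
    Set.InjOn (fun s : Finset V => G.edgeFinset ∩ s.sym2) {s | ∀ v ∈ s, ∃ w ∈ s, G.Adj v w} := by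
  intro s hs t ht (hst : G.edgeFinset ∩ s.sym2 = G.edgeFinset ∩ t.sym2)
  exact (subset_of_edgeFinset_inter_sym2_subset hs (hst ▸ inter_subset_right)).antisymm
    (subset_of_edgeFinset_inter_sym2_subset ht (hst ▸ inter_subset_right))

lemma connected_induce_starGraph_iff_of_notMem {r : V} {s : Finset V} (hr : r ∉ s) :
    (s.Nonempty ∧ ((starGraph r).induce ↑s).Connected) ↔ #s = 1 := by
  constructor
  · rintro ⟨⟨v, hv⟩, hc⟩
    by_contra hcard
    have hs : (s : Set V).Nontrivial :=
      one_lt_card_iff_nontrivial.1 (by have := card_pos.2 ⟨v, hv⟩; omega)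
    obtain ⟨w, hw, hvw⟩ := exists_adj_of_connected_induce hc hs hv
    rcases (starGraph_adj.1 hvw).2 with rfl | rfl <;> contradiction
  · intro h
    obtain ⟨v, rfl⟩ := card_eq_one.1 h
    exact ⟨singleton_nonempty v, by rw [coe_singleton]; exact connected_induce_singleton _ v⟩

section Finite

variable [Fintype V]

noncomputable def connectedFinsets (G : SimpleGraph V) : Finset (Finset V) :=
  univ.powerset.filter fun s => s.Nonempty ∧ (G.induce ↑s).Connected

lemma mem_connectedFinsets {s : Finset V} :
    s ∈ G.connectedFinsets ↔ s.Nonempty ∧ (G.induce ↑s).Connected := by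
  simp [connectedFinsets]

lemma connectedFinsets_eq_empty [IsEmpty V] : G.connectedFinsets = ∅ :=
  eq_empty_of_forall_notMem fun _ hs =>
    (mem_connectedFinsets.1 hs).1.ne_empty (Subsingleton.elim _ _)

variable [DecidableEq V]

theorem card_connectedFinsets_le [Fintype G.edgeSet] :
    #G.connectedFinsets ≤ 2 ^ #G.edgeFinset + Fintype.card V - 1 := by
  set C := G.connectedFinsets
  have hsingle : #(C.filter (fun s => #s = 1)) ≤ Fintype.card V := by
    calc #(C.filter (fun s => #s = 1)) ≤ #((univ : Finset V).powersetCard 1) :=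
          card_le_card fun s hs => mem_powersetCard.2 ⟨subset_univ s, (mem_filter.1 hs).2⟩
      _ = Fintype.card V := by rw [card_powersetCard, Nat.choose_one_right, card_univ]
  have hnoIsolated : ∀ s ∈ C.filter (fun s => ¬ #s = 1), ∀ v ∈ s, ∃ w ∈ s, G.Adj v w := by
    intro s hs v hv
    obtain ⟨hC, hcard⟩ := mem_filter.1 hs
    obtain ⟨hne, hc⟩ := mem_connectedFinsets.1 hC
    have : (s : Set V).Nontrivial := one_lt_card_iff_nontrivial.1 (by have := hne.card_pos; omega)
    exact exists_adj_of_connected_induce hc this hv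
  have hlarge : #(C.filter (fun s => ¬ #s = 1)) ≤ 2 ^ #G.edgeFinset - 1 := by
    calc #(C.filter (fun s => ¬ #s = 1)) ≤ #(G.edgeFinset.powerset.erase ∅) := by
          refine card_le_card_of_injOn (fun s => G.edgeFinset ∩ s.sym2) (fun s hs => ?_)
            (injOn_edgeFinset_inter_sym2.mono hnoIsolated)
          obtain ⟨v, hv⟩ := (mem_connectedFinsets.1 (mem_filter.1 hs).1).1
          obtain ⟨w, hw, hvw⟩ := hnoIsolated s hs v hv
          refine mem_erase.2 ⟨ne_empty_of_mem (a := s(v, w)) ?_, mem_powerset.2 inter_subset_left⟩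
          exact mem_inter.2 ⟨by simpa using hvw, mk_mem_sym2_iff.2 ⟨hv, hw⟩⟩
      _ = 2 ^ #G.edgeFinset - 1 := by
          rw [card_erase_of_mem (empty_mem_powerset _), card_powerset]
  have hsplit := card_filter_add_card_filter_not (s := C) (fun s => #s = 1)
  have := Nat.one_le_two_pow (n := #G.edgeFinset)
  omega

theorem card_connectedFinsets_starGraph (r : V) :
    #(starGraph r).connectedFinsets = 2 ^ (Fintype.card V - 1) + (Fintype.card V - 1) := by
  have hcentre : (starGraph r).connectedFinsets.filter (r ∈ ·) =
      (univ.erase r).powerset.image (insert r) := by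
    ext s
    simp only [mem_filter, mem_connectedFinsets, mem_image, mem_powerset]
    constructor
    · rintro ⟨-, hr⟩
      exact ⟨s.erase r, erase_subset_erase r (subset_univ s), insert_erase hr⟩
    · rintro ⟨t, -, rfl⟩
      refine ⟨⟨insert_nonempty r t, ?_⟩, mem_insert_self r t⟩
      exact connected_induce_of_forall_adj (by simp) fun _ _ h => starGraph_center_adj h
  have hleaves : (starGraph r).connectedFinsets.filter (r ∉ ·) =
      (univ.erase r).powersetCard 1 := by
    ext s
    simp only [mem_filter, mem_connectedFinsets, mem_powersetCard, subset_erase, subset_univ,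
      true_and]
    exact ⟨fun ⟨h, hr⟩ => ⟨hr, (connected_induce_starGraph_iff_of_notMem hr).1 h⟩,
      fun ⟨hr, h⟩ => ⟨(connected_induce_starGraph_iff_of_notMem hr).2 h, hr⟩⟩
  have hinj : Set.InjOn (insert r) (univ.erase r).powerset := insert_erase_invOn.2.injOn.mono
    fun t ht => notMem_mono (mem_powerset.1 ht) (notMem_erase r univ)
  rw [← card_filter_add_card_filter_not (r ∈ ·), hcentre, hleaves, card_image_of_injOn hinj]
  simp

end Finite

end SimpleGraph

lemma numSubtrees_eq_card_connectedFinsets {n : ℕ} (G : SimpleGraph (Fin n)) :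
    numSubtrees G = #G.connectedFinsets := by
  rw [numSubtrees, connectedFinsets]
  congr

lemma starGraph_succ_eq_starGraph_zero (m : ℕ) :
    _root_.starGraph (m + 1) = SimpleGraph.starGraph 0 := by
  ext a b
  simp only [_root_.starGraph, fromRel_adj, starGraph_adj, Fin.val_eq_zero_iff]

theorem numSubtrees_starGraph (n : ℕ) :
    numSubtrees (_root_.starGraph n) = 2 ^ (n - 1) + n - 1 := by
  rw [numSubtrees_eq_card_connectedFinsets]
  cases n with
  | zero => rw [connectedFinsets_eq_empty, card_empty]; rfl
  | succ m =>
    rw [starGraph_succ_eq_starGraph_zero, card_connectedFinsets_starGraph, Fintype.card_fin]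
    rfl

theorem star_maximizes_subtrees_general (n : ℕ) :
    (∀ T : SimpleGraph (Fin n), T.IsTree → numSubtrees T ≤ numSubtrees (starGraph n)) ∧
      numSubtrees (starGraph n) = 2 ^ (n - 1) + n - 1 := by
  refine ⟨fun T hT => ?_, numSubtrees_starGraph n⟩
  have hedges : #T.edgeFinset = n - 1 := by
    have := hT.card_edgeFinset
    rw [Fintype.card_fin] at this
    omega
  have hbound := card_connectedFinsets_le (G := T)
  rwa [Fintype.card_fin, hedges, ← numSubtrees_eq_card_connectedFinsets,
    ← numSubtrees_starGraph] at hbound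

/-- Among all trees on n ≥ 2 vertices, the star maximizes the number of subtrees,
and this maximum equals 2^(n-1) + n - 1. -/
theorem star_maximizes_subtrees (n : ℕ) (hn : 2 ≤ n) :
    (∀ T : SimpleGraph (Fin n), T.IsTree → numSubtrees T ≤ numSubtrees (starGraph n)) ∧
      numSubtrees (starGraph n) = 2 ^ (n - 1) + n - 1 :=
  star_maximizes_subtrees_general n
end

section
/- Among all trees on n ≥ 2 vertices, the path P_n minimizes the number of subtrees, and this minimum number equals n(n+1)/2. -/
open scoped Classical
open Finset SimpleGraph

/-! In a tree each unordered pair `{u, v}` of vertices, `u = v` allowed, spans a subtree: the vertex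
set of the unique `u`–`v` path. A path's vertex set determines its two ends, since any other pair of
its vertices is joined by a strictly shorter subpath; so the trees on `n` vertices have at least
`n(n+1)/2` subtrees. In the path graph a connected vertex set contains the path between its least
and greatest elements and lies in the interval they bound, so every subtree arises this way. -/

namespace SimpleGraph

variable {V : Type*} {G : SimpleGraph V} {u v x y : V}

theorem Walk.IsPath.exists_isPath_between_mem_support {p : G.Walk u v}
    (hp : p.IsPath) (hx : x ∈ p.support) (hy : y ∈ p.support) :
    ∃ r : G.Walk x y, r.IsPath ∧ r.support ⊆ p.support ∧
      (p.length ≤ r.length → s(x, y) = s(u, v)) := by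
  have length_split {a b c : V} (w : G.Walk a b) (hc : c ∈ w.support) :
      (w.takeUntil c hc).length + (w.dropUntil c hc).length = w.length := by
    rw [← Walk.length_append, w.take_spec hc]
  have hp_len := length_split p hx
  by_cases hyd : y ∈ (p.dropUntil x hx).support
  · refine ⟨_, (hp.dropUntil hx).takeUntil hyd,
      List.Subset.trans ((p.dropUntil x hx).support_takeUntil_subset_support hyd)
        (p.support_dropUntil_subset_support hx), fun hlen => ?_⟩
    have hd_len := length_split _ hyd
    rw [← Walk.eq_of_length_eq_zero (by omega : (p.takeUntil x hx).length = 0),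
      Walk.eq_of_length_eq_zero (by omega : ((p.dropUntil x hx).dropUntil y hyd).length = 0)]
  · have hyt : y ∈ (p.takeUntil x hx).support := by
      rw [← p.take_spec hx, Walk.mem_support_append_iff] at hy
      exact hy.resolve_right hyd
    refine ⟨_, ((hp.takeUntil hx).dropUntil hyt).reverse, ?_, fun hlen => ?_⟩
    · rw [Walk.support_reverse]
      exact fun z hz => p.support_takeUntil_subset_support hx
        ((p.takeUntil x hx).support_dropUntil_subset_support hyt (List.mem_reverse.1 hz))
    have ht_len := length_split _ hyt
    rw [Walk.length_reverse] at hlen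
    rw [← Walk.eq_of_length_eq_zero (by omega : ((p.takeUntil x hx).takeUntil y hyt).length = 0),
      Walk.eq_of_length_eq_zero (by omega : (p.dropUntil x hx).length = 0), Sym2.eq_swap]

namespace IsAcyclic

theorem eq_of_isPath (hA : G.IsAcyclic) {p q : G.Walk u v} (hp : p.IsPath) (hq : q.IsPath) :
    p = q :=
  congrArg Subtype.val ((hA.subsingleton_path u v).elim ⟨p, hp⟩ ⟨q, hq⟩)

theorem support_toFinset_eq_iff [DecidableEq V] (hA : G.IsAcyclic)
    {p : G.Walk u v} {q : G.Walk x y} (hp : p.IsPath) (hq : q.IsPath) :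
    p.support.toFinset = q.support.toFinset ↔ s(u, v) = s(x, y) := by
  constructor
  · intro h
    have mem_p {z : V} (hz : z ∈ q.support) : z ∈ p.support :=
      List.mem_toFinset.1 (h ▸ List.mem_toFinset.2 hz)
    obtain ⟨r, hr, -, hlen⟩ :=
      hp.exists_isPath_between_mem_support (mem_p q.start_mem_support) (mem_p q.end_mem_support)
    refine (hlen ?_).symm
    have hcard := congrArg Finset.card h
    rw [List.toFinset_card_of_nodup hp.support_nodup, List.toFinset_card_of_nodup hq.support_nodup,
      Walk.length_support, Walk.length_support] at hcard
    rw [hA.eq_of_isPath hr hq]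
    omega
  · intro h
    rcases Sym2.eq_iff.1 h with ⟨rfl, rfl⟩ | ⟨rfl, rfl⟩
    · rw [hA.eq_of_isPath hp hq]
    · rw [hA.eq_of_isPath hp hq.reverse, Walk.support_reverse, List.toFinset_reverse]

theorem support_subset_of_induce_preconnected (hA : G.IsAcyclic) {s : Set V}
    (hs : (G.induce s).Preconnected) (hu : u ∈ s) (hv : v ∈ s) {p : G.Walk u v} (hp : p.IsPath) :
    ∀ z ∈ p.support, z ∈ s := by
  obtain ⟨w⟩ := hs ⟨u, hu⟩ ⟨v, hv⟩
  have hp_eq : (w.map (Embedding.induce s).toHom).bypass = p :=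
    hA.eq_of_isPath (Walk.bypass_isPath _) hp
  intro z hz
  rw [← hp_eq] at hz
  obtain ⟨z', -, rfl⟩ :=
    List.mem_map.1 (Walk.support_map _ _ ▸ Walk.support_bypass_subset_support _ hz)
  exact z'.2

end IsAcyclic

noncomputable def Preconnected.pathSupport [DecidableEq V] (hG : G.Preconnected) (e : Sym2 V) :
    Finset V :=
  (hG e.out.1 e.out.2).some.bypass.support.toFinset

theorem IsAcyclic.pathSupport_mk [DecidableEq V] (hA : G.IsAcyclic) (hG : G.Preconnected)
    {p : G.Walk u v} (hp : p.IsPath) : hG.pathSupport s(u, v) = p.support.toFinset :=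
  (hA.support_toFinset_eq_iff (Walk.bypass_isPath _) hp).2 (Quot.out_eq _)

theorem IsAcyclic.pathSupport_injective [DecidableEq V] (hA : G.IsAcyclic)
    (hG : G.Preconnected) : Function.Injective hG.pathSupport := by
  intro e e' h
  induction e using Sym2.ind with | _ u v => ?_
  induction e' using Sym2.ind with | _ x y => ?_
  rwa [hA.pathSupport_mk hG (hG u v).some.bypass_isPath,
    hA.pathSupport_mk hG (hG x y).some.bypass_isPath,
    hA.support_toFinset_eq_iff (Walk.bypass_isPath _) (Walk.bypass_isPath _)] at h

section Counting

variable [Fintype V]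

noncomputable def connectedSubsets (G : SimpleGraph V) : Finset (Finset V) :=
  univ.powerset.filter fun s => s.Nonempty ∧ (G.induce (s : Set V)).Connected

theorem mem_connectedSubsets {s : Finset V} :
    s ∈ G.connectedSubsets ↔ s.Nonempty ∧ (G.induce (s : Set V)).Connected := by
  simp [connectedSubsets]

theorem Preconnected.pathSupport_mem_connectedSubsets (hG : G.Preconnected) (e : Sym2 V) :
    hG.pathSupport e ∈ G.connectedSubsets := by
  rw [mem_connectedSubsets, pathSupport, List.coe_toFinset]
  exact ⟨⟨_, List.mem_toFinset.2 (Walk.start_mem_support _)⟩, Walk.connected_induce_support _⟩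

theorem IsAcyclic.card_sym2_le_card_connectedSubsets (hA : G.IsAcyclic) (hG : G.Preconnected) :
    Fintype.card (Sym2 V) ≤ #G.connectedSubsets := by
  rw [← card_univ, ← card_image_of_injective _ (hA.pathSupport_injective hG)]
  exact card_le_card (image_subset_iff.2 fun e _ => hG.pathSupport_mem_connectedSubsets e)

theorem IsAcyclic.card_connectedSubsets_eq_card_sym2 [DecidableEq V] (hA : G.IsAcyclic)
    (hG : G.Preconnected) (h : ∀ s ∈ G.connectedSubsets,
      ∃ (u v : V) (p : G.Walk u v), p.IsPath ∧ p.support.toFinset = s) :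
    #G.connectedSubsets = Fintype.card (Sym2 V) := by
  refine le_antisymm ?_ (hA.card_sym2_le_card_connectedSubsets hG)
  rw [← card_univ, ← card_image_of_injective _ (hA.pathSupport_injective hG)]
  refine card_le_card fun s hs => ?_
  obtain ⟨u, v, p, hp, rfl⟩ := h s hs
  exact mem_image.2 ⟨s(u, v), mem_univ _, hA.pathSupport_mk hG hp⟩

end Counting

section PathGraph

variable {n : ℕ}

theorem Walk.pathGraph_mem_edges {a b i j : Fin n} (w : (pathGraph n).Walk a b)
    (hij : (i : ℕ) + 1 = j) (hai : a ≤ i) (hjb : j ≤ b) : s(i, j) ∈ w.edges := by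
  induction w with
  | nil => exact absurd (hai.trans_lt (Fin.lt_def.2 (by omega))) hjb.not_gt
  | @cons a c b hac w ih =>
    rw [Walk.edges_cons, List.mem_cons]
    by_cases h : a = i ∧ c = j
    · exact .inl (by rw [h.1, h.2])
    · rw [pathGraph_adj] at hac
      simp only [Fin.le_def, Fin.ext_iff] at hai h
      exact .inr (ih (Fin.le_def.2 (by omega)) hjb)

theorem Walk.pathGraph_mem_support {a b k : Fin n} (w : (pathGraph n).Walk a b)
    (hak : a ≤ k) (hkb : k ≤ b) : k ∈ w.support := by
  rcases hkb.eq_or_lt with rfl | hkb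
  · exact w.end_mem_support
  · rw [Fin.lt_def] at hkb
    exact w.fst_mem_support_of_mem_edges
      (w.pathGraph_mem_edges (j := ⟨k + 1, by omega⟩) rfl hak (Fin.le_def.2 hkb))

theorem pathGraph_isAcyclic (n : ℕ) : (pathGraph n).IsAcyclic := by
  refine isAcyclic_iff_forall_adj_isBridge.2 fun u v huv => isBridge_iff_forall_walk_mem_edges.2 ?_
  intro w
  rcases pathGraph_adj.1 huv with h | h
  · exact w.pathGraph_mem_edges h le_rfl le_rfl
  · simpa [Sym2.eq_swap] using w.reverse.pathGraph_mem_edges h le_rfl le_rfl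

theorem pathGraph_exists_isPath_support_toFinset_eq {s : Finset (Fin n)}
    (hs : s ∈ (pathGraph n).connectedSubsets) :
    ∃ (u v : Fin n) (p : (pathGraph n).Walk u v), p.IsPath ∧ p.support.toFinset = s := by
  obtain ⟨hne, hconn⟩ := mem_connectedSubsets.1 hs
  refine ⟨_, _, (pathGraph_preconnected n (s.min' hne) (s.max' hne)).some.bypass,
    Walk.bypass_isPath _, ?_⟩
  ext z
  rw [List.mem_toFinset]
  exact ⟨(pathGraph_isAcyclic n).support_subset_of_induce_preconnected hconn.preconnected
      (s.min'_mem hne) (s.max'_mem hne) (Walk.bypass_isPath _) z,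
    fun hz => Walk.pathGraph_mem_support _ (s.min'_le z hz) (s.le_max' z hz)⟩

theorem card_connectedSubsets_pathGraph (n : ℕ) :
    #(pathGraph n).connectedSubsets = Fintype.card (Sym2 (Fin n)) :=
  (pathGraph_isAcyclic n).card_connectedSubsets_eq_card_sym2 (pathGraph_preconnected n)
    fun _ => pathGraph_exists_isPath_support_toFinset_eq

end PathGraph

end SimpleGraph

theorem numSubtrees_eq_card_connectedSubsets {n : ℕ} (T : SimpleGraph (Fin n)) :
    numSubtrees T = #T.connectedSubsets := by
  -- not `rfl`: the two filters decide `Connected` by different instances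
  unfold numSubtrees connectedSubsets
  congr

theorem path_minimizes_subtrees_general (n : ℕ) :
    (∀ T : SimpleGraph (Fin n), T.IsTree →
        numSubtrees (SimpleGraph.pathGraph n) ≤ numSubtrees T) ∧
      numSubtrees (SimpleGraph.pathGraph n) = n * (n + 1) / 2 := by
  have hpath : numSubtrees (pathGraph n) = Fintype.card (Sym2 (Fin n)) := by
    rw [numSubtrees_eq_card_connectedSubsets, card_connectedSubsets_pathGraph]
  refine ⟨fun T hT => ?_, ?_⟩
  · rw [hpath, numSubtrees_eq_card_connectedSubsets]
    exact hT.isAcyclic.card_sym2_le_card_connectedSubsets hT.connected.preconnected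
  · rw [hpath, Sym2.card, Fintype.card_fin, Nat.choose_two_right, Nat.add_sub_cancel, Nat.mul_comm]

/-- Among all trees on n ≥ 2 vertices, the path minimizes the number of subtrees,
and this minimum equals n(n+1)/2. -/
theorem path_minimizes_subtrees (n : ℕ) (hn : 2 ≤ n) :
    (∀ T : SimpleGraph (Fin n), T.IsTree →
        numSubtrees (SimpleGraph.pathGraph n) ≤ numSubtrees T) ∧
      numSubtrees (SimpleGraph.pathGraph n) = n * (n + 1) / 2 :=
  path_minimizes_subtrees_general n
end

section
/- Among all nonincreasing degree sequences of trees on n ≥ 2 vertices, the star sequence (n−1, 1, 1, …, 1) majorizes every other tree degree sequence, and the path sequence (2, 2, …, 2, 1, 1) is majorized by every other tree degree sequence. -/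
/-!
Every entry of a tree degree sequence `d` is at least `1`, so the entries after position `k` sum
to at least `n - k`, and the first `k` sum to at most `2(n - 1) - (n - k) = n + k - 2`: the star's
partial sum. For the path, look at the `k`-th entry of `d`. If it is at least `2`, then so are
the first `k` entries (`d` is nonincreasing), whose sum is at least `2k`. Otherwise every later
entry equals `1`, and the first `k` entries sum to exactly `n + k - 2`. Either bound dominates
the path's partial sum `k + min k (n - 2)`.
-/

open Finset

/-- Partial sum of the first k entries of a sequence indexed by Fin n. -/
def partialSum {n : ℕ} (d : Fin n → ℕ) (k : ℕ) : ℕ :=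
  ∑ i ∈ Finset.univ.filter (fun i : Fin n => (i : ℕ) < k), d i

/-- `Majorizes b a` : b majorizes a (equal total sums, partial sums of b dominate). -/
def Majorizes {n : ℕ} (b a : Fin n → ℕ) : Prop :=
  (∑ i, a i = ∑ i, b i) ∧ ∀ k < n, partialSum a k ≤ partialSum b k

/-- The nonincreasing degree sequence of the star: (n-1, 1, …, 1). -/
def starSeq (n : ℕ) : Fin n → ℕ := fun i => if (i : ℕ) = 0 then n - 1 else 1

/-- The nonincreasing degree sequence of the path: (2, …, 2, 1, 1). -/
def pathSeq (n : ℕ) : Fin n → ℕ := fun i => if (i : ℕ) < n - 2 then 2 else 1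

def tailSum {n : ℕ} (d : Fin n → ℕ) (k : ℕ) : ℕ :=
  ∑ i ∈ Finset.univ.filter (fun i : Fin n => ¬ (i : ℕ) < k), d i

section PartialSums

variable {n : ℕ}

theorem card_filter_not_val_lt (k : ℕ) : #{i : Fin n | ¬ (i : ℕ) < k} = n - k := by
  rw [filter_not, card_sdiff_of_subset (filter_subset _ _), card_univ, Fintype.card_fin,
    Fin.card_filter_val_lt]
  omega

theorem partialSum_add_tailSum (d : Fin n → ℕ) (k : ℕ) :
    partialSum d k + tailSum d k = ∑ i, d i :=
  sum_filter_add_sum_filter_not _ _ _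

@[simp]
theorem partialSum_zero (d : Fin n → ℕ) : partialSum d 0 = 0 := by
  simp [partialSum]

theorem partialSum_succ (d : Fin n → ℕ) {k : ℕ} (hk : k < n) :
    partialSum d (k + 1) = partialSum d k + d ⟨k, hk⟩ := by
  rw [partialSum, partialSum, add_comm _ (d _), ← sum_insert (by simp)]
  congr 1
  ext i
  simp only [mem_filter, mem_univ, true_and, mem_insert, Fin.ext_iff]
  omega

theorem partialSum_of_le (d : Fin n → ℕ) {k : ℕ} (hk : n ≤ k) :
    partialSum d k = ∑ i, d i := by
  rw [partialSum, filter_true_of_mem fun i _ => by omega]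

theorem partialSum_add_sub_le_sum {d : Fin n → ℕ} (hpos : ∀ i, 1 ≤ d i) (k : ℕ) :
    partialSum d k + (n - k) ≤ ∑ i, d i := by
  rw [← partialSum_add_tailSum d k, tailSum, ← card_filter_not_val_lt k]
  simpa using card_nsmul_le_sum _ _ 1 fun i _ => hpos i

theorem tailSum_eq_of_antitone {d : Fin n → ℕ} (hd : Antitone d) (hpos : ∀ i, 1 ≤ d i)
    {j : Fin n} (hj : d j ≤ 1) : tailSum d (j + 1) = n - (j + 1) := by
  have tail_eq_one : ∀ i ∈ univ.filter (fun i : Fin n => ¬ (i : ℕ) < j + 1), d i = 1 :=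
    fun i hi => le_antisymm ((hd (Fin.le_def.2 (by have := (mem_filter.1 hi).2; omega))).trans hj)
      (hpos i)
  rw [tailSum, sum_congr rfl tail_eq_one, sum_const, smul_eq_mul, mul_one,
    card_filter_not_val_lt]

theorem mul_le_partialSum_of_antitone {d : Fin n → ℕ} (hd : Antitone d) (j : Fin n) :
    (j + 1) * d j ≤ partialSum d (j + 1) := by
  have card_eq : #{i : Fin n | (i : ℕ) < j + 1} = j + 1 := by
    rw [Fin.card_filter_val_lt]; omega
  calc (j + 1) * d j = #{i : Fin n | (i : ℕ) < j + 1} • d j := by rw [card_eq, smul_eq_mul]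
    _ ≤ partialSum d (j + 1) :=
      card_nsmul_le_sum _ _ _ fun i hi => hd (Fin.le_def.2 (by have := (mem_filter.1 hi).2; omega))

end PartialSums

theorem partialSum_starSeq {n k : ℕ} (hk : 1 ≤ k) (hkn : k ≤ n) :
    partialSum (starSeq n) k = (n - 1) + (k - 1) := by
  induction k, hk using Nat.le_induction with
  | base => simp [partialSum_succ _ (show 0 < n by omega), starSeq]
  | succ k hk ih =>
    rw [partialSum_succ _ hkn, ih (by omega)]
    simp only [starSeq]
    rw [if_neg (show k ≠ 0 by omega)]
    omega

theorem sum_starSeq (n : ℕ) : ∑ i, starSeq n i = 2 * (n - 1) := by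
  cases n with
  | zero => simp
  | succ n => simp [starSeq, Fin.sum_univ_succ]; omega

theorem partialSum_pathSeq {n k : ℕ} (hkn : k ≤ n) :
    partialSum (pathSeq n) k = k + min k (n - 2) := by
  induction k with
  | zero => simp
  | succ k ih =>
    rw [partialSum_succ _ hkn, ih (by omega)]
    simp only [pathSeq]
    split <;> omega

theorem sum_pathSeq {n : ℕ} (hn : 2 ≤ n) : ∑ i, pathSeq n i = 2 * (n - 1) := by
  rw [← partialSum_of_le _ le_rfl, partialSum_pathSeq le_rfl]
  omega

theorem starSeq_majorizes {n : ℕ} {d : Fin n → ℕ} (hpos : ∀ i, 1 ≤ d i)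
    (hsum : ∑ i, d i = 2 * (n - 1)) : Majorizes (starSeq n) d := by
  refine ⟨by rw [hsum, sum_starSeq], fun k hk => ?_⟩
  rcases Nat.eq_zero_or_pos k with rfl | hk_pos
  · simp
  · have := partialSum_add_sub_le_sum hpos k
    rw [partialSum_starSeq hk_pos hk.le]
    omega

theorem majorizes_pathSeq {n : ℕ} (hn : 2 ≤ n) {d : Fin n → ℕ} (hd : Antitone d)
    (hpos : ∀ i, 1 ≤ d i) (hsum : ∑ i, d i = 2 * (n - 1)) : Majorizes d (pathSeq n) := by
  refine ⟨by rw [hsum, sum_pathSeq hn], fun k hk => ?_⟩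
  rw [partialSum_pathSeq hk.le]
  cases k with
  | zero => simp
  | succ j =>
    let i : Fin n := ⟨j, by omega⟩
    by_cases hi : 2 ≤ d i
    · calc j + 1 + min (j + 1) (n - 2) ≤ (j + 1) * 2 := by omega
        _ ≤ (j + 1) * d i := Nat.mul_le_mul_left _ hi
        _ ≤ partialSum d (j + 1) := mul_le_partialSum_of_antitone hd i
    · have htail : tailSum d (j + 1) = n - (j + 1) :=
        tailSum_eq_of_antitone hd hpos (j := i) (by omega)
      have := partialSum_add_tailSum d (j + 1)
      omega

/-- Among nonincreasing degree sequences of trees on n ≥ 2 vertices, the star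
sequence majorizes every tree degree sequence and the path sequence is majorized
by every tree degree sequence. -/
theorem star_path_extremal_majorization (n : ℕ) (hn : 2 ≤ n) (d : Fin n → ℕ)
    (hd : Antitone d) (hpos : ∀ i, 1 ≤ d i) (hsum : ∑ i, d i = 2 * (n - 1)) :
    Majorizes (starSeq n) d ∧ Majorizes d (pathSeq n) :=
  ⟨starSeq_majorizes hpos hsum, majorizes_pathSeq hn hd hpos hsum⟩
end
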